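/- Let r ∈ (2,∞). There exists a constant C = C(r) such that for every nonnegative measurable g : ℝ² → ℝ and every measurable u : ℝ² → ℂ, ‖ u(x) ∫_{ℝ²} |log(|x−y|/⟨x⟩)| g(y) dy ‖_{L²_x(ℝ²)} ≤ C (‖g‖_{L¹} + ‖(log⟨·⟩) g‖_{L¹}) (‖u‖_{L²} + ‖u‖_{L^r}), where both sides may be +∞. -/

import Mathlib

open MeasureTheory ENNReal NNReal
set_option maxHeartbeats 1000000

noncomputable section

abbrev E2 := EuclideanSpace ℝ (Fin 2)

/-- The Japanese bracket `⟨x⟩ = (1+|x|²)^{1/2}`. -/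
noncomputable def jbr (x : E2) : ℝ := Real.sqrt (1 + ‖x‖ ^ 2)

lemma jbr_one_le (x : E2) : 1 ≤ jbr x := by
  have h := Real.sqrt_le_sqrt (show (1:ℝ) ≤ 1 + ‖x‖^2 by nlinarith [sq_nonneg ‖x‖])
  rw [Real.sqrt_one] at h
  exact h

lemma jbr_pos (x : E2) : 0 < jbr x := lt_of_lt_of_le one_pos (jbr_one_le x)

lemma norm_le_jbr (x : E2) : ‖x‖ ≤ jbr x := by
  have h := Real.sqrt_le_sqrt (show ‖x‖^2 ≤ 1 + ‖x‖^2 by linarith [sq_nonneg ‖x‖])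
  rw [Real.sqrt_sq (norm_nonneg x)] at h
  exact h

lemma jbr_lip (x y : E2) : jbr x ≤ jbr y + ‖x - y‖ := by
  have hb : (0:ℝ) ≤ jbr y + ‖x - y‖ := by linarith [jbr_pos y, norm_nonneg (x-y)]
  have key2 : 1 + ‖x‖^2 ≤ (jbr y + ‖x - y‖)^2 := by
    have hsq : (jbr y)^2 = 1 + ‖y‖^2 := Real.sq_sqrt (by positivity)
    nlinarith [norm_sub_norm_le x y, norm_le_jbr y, norm_nonneg (x-y), norm_nonneg x,
      norm_nonneg y, jbr_one_le y, abs_norm_sub_norm_le x y]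
  calc jbr x = Real.sqrt (1 + ‖x‖^2) := rfl
    _ ≤ Real.sqrt ((jbr y + ‖x - y‖)^2) := Real.sqrt_le_sqrt key2
    _ = jbr y + ‖x - y‖ := Real.sqrt_sq hb

noncomputable def hfun (z : E2) : ℝ := if ‖z‖ < 1 then -Real.log ‖z‖ else 0

lemma hfun_nonneg (z : E2) : 0 ≤ hfun z := by
  rw [hfun]
  split
  · rename_i h
    simp only [Left.nonneg_neg_iff]
    exact Real.log_nonpos (norm_nonneg z) h.le
  · exact le_refl 0

lemma hfun_meas : Measurable hfun := by
  apply Measurable.ite (measurableSet_lt measurable_norm measurable_const)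
  · exact (Real.measurable_log.comp measurable_norm).neg
  · exact measurable_const

lemma key_bound (x y : E2) :
    |Real.log (‖x - y‖ / jbr x)| ≤ Real.log (2 * jbr y) + hfun (x - y) := by
  have hb1 : 1 ≤ jbr y := jbr_one_le y
  have ha1 : 1 ≤ jbr x := jbr_one_le x
  have ha0 : 0 < jbr x := jbr_pos x
  have hlog2b : Real.log 2 ≤ Real.log (2 * jbr y) :=
    Real.log_le_log (by norm_num) (by nlinarith)
  have hlog2 : (0:ℝ) < Real.log 2 := Real.log_pos (by norm_num)
  have hfn : 0 ≤ hfun (x - y) := hfun_nonneg _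
  rcases eq_or_lt_of_le (norm_nonneg (x - y)) with h0 | ht
  · rw [← h0]
    simp only [zero_div, Real.log_zero, abs_zero]
    linarith
  · rw [Real.log_div ht.ne' ha0.ne', abs_le]
    constructor
    · -- lower bound
      rcases lt_or_ge ‖x - y‖ 1 with h1 | h1
      · have hle : jbr x ≤ 2 * jbr y := by
          have := jbr_lip x y; nlinarith
        have hla : Real.log (jbr x) ≤ Real.log (2 * jbr y) := Real.log_le_log ha0 hle
        have hh : hfun (x - y) = -Real.log ‖x - y‖ := if_pos h1
        linarith
      · have hle : jbr x ≤ 2 * jbr y * ‖x - y‖ := by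
          have := jbr_lip x y; nlinarith
        have hla : Real.log (jbr x) ≤ Real.log (2 * jbr y) + Real.log ‖x - y‖ := by
          rw [← Real.log_mul (by positivity) ht.ne']
          exact Real.log_le_log ha0 hle
        have hh : hfun (x - y) = 0 := if_neg (not_lt.2 h1)
        linarith
    · -- upper bound
      have ht2ab : ‖x - y‖ ≤ 2 * jbr y * jbr x := by
        nlinarith [norm_le_jbr x, norm_le_jbr y, norm_sub_le x y]
      have : Real.log ‖x - y‖ ≤ Real.log (2 * jbr y) + Real.log (jbr x) := by
        rw [← Real.log_mul (by positivity) ha0.ne']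
        exact Real.log_le_log ht ht2ab
      linarith


noncomputable def hE (z : E2) : ℝ≥0∞ := ENNReal.ofReal (hfun z)

lemma hE_meas : Measurable hE := ENNReal.measurable_ofReal.comp hfun_meas

lemma hE_lintegral_lt_top {s : ℝ} (hs : 0 < s) : (∫⁻ z, hE z ^ s) < ⊤ := by
  obtain ⟨m, hm⟩ : ∃ m : ℕ, s ≤ m := exists_nat_ge s
  set B : ℕ → E2 → ℝ≥0∞ := fun n =>
    (Metric.ball (0:E2) ((1/2:ℝ)^n)).indicator
      (fun _ => ENNReal.ofReal (((n:ℝ)+1)^m)) with hB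
  have hpt : ∀ z, hE z ^ s ≤ ∑' n, B n z := by
    intro z
    rcases le_or_gt 1 ‖z‖ with h1 | h1
    · have hz : hfun z = 0 := if_neg (not_lt.2 h1)
      simp [hE, hz, ENNReal.zero_rpow_of_pos hs]
    rcases eq_or_lt_of_le (norm_nonneg z) with h0 | h0
    · have hz : hfun z = 0 := by rw [hfun, if_pos h1, ← h0]; simp
      simp [hE, hz, ENNReal.zero_rpow_of_pos hs]
    · have hex : ∃ n : ℕ, (1/2:ℝ)^(n+1) ≤ ‖z‖ := by
        obtain ⟨n, hn⟩ := exists_pow_lt_of_lt_one h0 (by norm_num : (1/2:ℝ) < 1)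
        refine ⟨n, le_trans ?_ hn.le⟩
        exact pow_le_pow_of_le_one (by norm_num) (by norm_num) (Nat.le_succ n)
      set n₀ := Nat.find hex with hn₀
      have hlow : (1/2:ℝ)^(n₀+1) ≤ ‖z‖ := Nat.find_spec hex
      have hhigh : ‖z‖ < (1/2:ℝ)^n₀ := by
        rcases Nat.eq_zero_or_pos n₀ with h | h
        · rw [h]; simpa using h1
        · have hmin := Nat.find_min hex (show n₀ - 1 < n₀ from Nat.sub_lt h one_pos)
          rw [show n₀ - 1 + 1 = n₀ by omega] at hmin
          exact lt_of_not_ge hmin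
      have hz_ball : z ∈ Metric.ball (0:E2) ((1/2:ℝ)^n₀) := by
        simpa [mem_ball_zero_iff] using hhigh
      have hbound : hE z ^ s ≤ ENNReal.ofReal (((n₀:ℝ)+1)^m) := by
        rw [hE, ENNReal.ofReal_rpow_of_nonneg (hfun_nonneg z) hs.le]
        apply ENNReal.ofReal_le_ofReal
        have hfz : hfun z = -Real.log ‖z‖ := if_pos h1
        have hlogz : -Real.log ‖z‖ ≤ ((n₀:ℝ)+1) * Real.log 2 := by
          have hl := Real.log_le_log (by positivity) hlow
          rw [Real.log_pow, show Real.log (1/2:ℝ) = -Real.log 2 by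
            rw [one_div, Real.log_inv]] at hl
          push_cast at hl ⊢
          linarith
        have hnn : 0 ≤ hfun z := hfun_nonneg z
        have c1 : hfun z ^ s ≤ (((n₀:ℝ)+1) * Real.log 2) ^ s :=
          Real.rpow_le_rpow hnn (by rw [hfz]; exact hlogz) hs.le
        have hlog2le : Real.log 2 ≤ 1 := by
          linarith [Real.log_le_sub_one_of_pos (show (0:ℝ) < 2 by norm_num)]
        have c2 : (((n₀:ℝ)+1) * Real.log 2) ^ s ≤ ((n₀:ℝ)+1) ^ s := by
          apply Real.rpow_le_rpow
              (mul_nonneg (by positivity) (Real.log_nonneg one_le_two)) ?_ hs.le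
          nlinarith [show (0:ℝ) ≤ (n₀:ℝ) from Nat.cast_nonneg n₀]
        have c3 : ((n₀:ℝ)+1) ^ s ≤ ((n₀:ℝ)+1) ^ (m:ℝ) :=
          Real.rpow_le_rpow_of_exponent_le
            (by linarith [show (0:ℝ) ≤ (n₀:ℝ) from Nat.cast_nonneg n₀]) hm
        rw [Real.rpow_natCast] at c3
        linarith
      calc hE z ^ s ≤ B n₀ z := by
            rw [hB]; simp only [Set.indicator_of_mem hz_ball]; exact hbound
        _ ≤ ∑' n, B n z := ENNReal.le_tsum n₀
  have hsum : Summable (fun n : ℕ => (((n:ℝ)+1)^m * ((1/2:ℝ)^n)^2)) := by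
    have h4 : Summable (fun n : ℕ => ((n:ℝ))^m * ((1/4:ℝ))^n) :=
      summable_pow_mul_geometric_of_norm_lt_one m (by norm_num)
    have h5 : Summable (fun n : ℕ => (((n+1:ℕ):ℝ))^m * ((1/4:ℝ))^(n+1)) :=
      (_root_.summable_nat_add_iff 1).mpr h4
    have h6 := h5.mul_left 4
    apply h6.congr
    intro n
    have e : ((1/2:ℝ)^n)^2 = (1/4:ℝ)^n := by
      rw [← pow_mul, show n*2 = 2*n by ring, pow_mul]; norm_num
    rw [e]
    push_cast
    ring
  calc ∫⁻ z, hE z ^ s ≤ ∫⁻ z, ∑' n, B n z := lintegral_mono hpt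
    _ = ∑' n, ∫⁻ z, B n z :=
        lintegral_tsum (fun n => (measurable_const.indicator measurableSet_ball).aemeasurable)
    _ = ∑' (n : ℕ), ENNReal.ofReal (((n:ℝ)+1)^m * ((1/2:ℝ)^n)^2) * volume (Metric.ball (0:E2) 1) :=
        tsum_congr fun n => by
          rw [hB, lintegral_indicator_const measurableSet_ball,
            Measure.addHaar_ball volume (0:E2) (by positivity),
            show Module.finrank ℝ E2 = 2 from finrank_euclideanSpace_fin, ← mul_assoc,
            ← ENNReal.ofReal_mul (by positivity)]
    _ = ENNReal.ofReal (∑' (n : ℕ), (((n:ℝ)+1)^m * ((1/2:ℝ)^n)^2)) * volume (Metric.ball (0:E2) 1) := by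
        rw [ENNReal.tsum_mul_right,
          ← ENNReal.ofReal_tsum_of_nonneg (fun n => by positivity) hsum]
    _ < ⊤ := ENNReal.mul_lt_top ENNReal.ofReal_lt_top measure_ball_lt_top

/-- For `r ∈ (2,∞)` there is `C = C(r)` such that for every nonnegative measurable
`g : ℝ² → ℝ` and every measurable `u : ℝ² → ℂ`,
`‖u(x) ∫ |log(|x−y|/⟨x⟩)| g(y) dy‖_{L²_x} ≤ C(‖g‖_{L¹} + ‖(log⟨·⟩)g‖_{L¹})(‖u‖_{L²}+‖u‖_{L^r})`,
both sides possibly `+∞` (stated in `ℝ≥0∞`). -/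
theorem stmt16 (r : ℝ) (hr : 2 < r) :
    ∃ C : ℝ≥0, ∀ g : E2 → ℝ, Measurable g → (∀ y, 0 ≤ g y) →
      ∀ u : E2 → ℂ, Measurable u →
      (∫⁻ x, ((‖u x‖₊ : ℝ≥0∞) *
          ∫⁻ y, ENNReal.ofReal |Real.log (‖x - y‖ / jbr x)| * ENNReal.ofReal (g y)) ^ 2)
        ^ (1 / 2 : ℝ)
      ≤ C * ((∫⁻ y, ENNReal.ofReal (g y)) +
              ∫⁻ y, ENNReal.ofReal (Real.log (jbr y) * g y)) *
          (eLpNorm u 2 volume + eLpNorm u (ENNReal.ofReal r) volume) := by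

  have hr0 : (0:ℝ) < r := by linarith
  have hr2 : (0:ℝ) < r - 2 := by linarith
  set q' : ℝ := r / (r - 2) with hq'
  have hq'1 : 1 < q' := by rw [hq', lt_div_iff₀ hr2]; linarith
  set s : ℝ := 2 * q' with hsdef
  have hs1 : 1 < s := by rw [hsdef]; nlinarith
  have hs0 : (0:ℝ) < s := by linarith
  set s' : ℝ := s / (s - 1) with hs'def
  have hconj_s : s.HolderConjugate s' :=
    (Real.holderConjugate_iff_eq_conjExponent hs1).2 rfl
  have hconj_r : (r/2).HolderConjugate q' := by
    rw [Real.holderConjugate_iff]; constructor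
    · linarith
    · rw [hq']; field_simp; ring
  have hs'0 : 0 < s' := hconj_s.symm.pos
  have hinv : 1/s + 1/s' = 1 := by
    simpa [one_div] using hconj_s.inv_add_inv_eq_one
  set Yh : ℝ≥0∞ := ∫⁻ z, hE z ^ s with hYhdef
  have hYh_top : Yh ≠ ⊤ := (hE_lintegral_lt_top hs0).ne
  have hYhs_top : Yh ^ (1/s) ≠ ⊤ :=
    ENNReal.rpow_ne_top_of_nonneg (by positivity) hYh_top
  refine ⟨1 + (Yh ^ (1/s)).toNNReal, ?_⟩
  intro g hg hg0 u hu
  set C : ℝ≥0∞ := ((1 + (Yh ^ (1/s)).toNNReal : ℝ≥0) : ℝ≥0∞) with hCdef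
  have hCeq : C = 1 + ((Yh ^ (1/s)).toNNReal : ℝ≥0∞) := by
    rw [hCdef, ENNReal.coe_add, ENNReal.coe_one]
  have hC1 : (1:ℝ≥0∞) ≤ C := by rw [hCeq]; exact le_self_add
  have hC2 : Yh ^ (1/s) ≤ C := by
    rw [hCeq, ENNReal.coe_toNNReal hYhs_top]; exact le_add_self
  have hgm : Measurable fun y => ENNReal.ofReal (g y) :=
    ENNReal.measurable_ofReal.comp hg
  set A₁ : ℝ≥0∞ := ∫⁻ y, ENNReal.ofReal (g y) with hA1def
  set A₂ : ℝ≥0∞ := ∫⁻ y, ENNReal.ofReal (Real.log (jbr y) * g y) with hA2def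
  -- edge case: g vanishes a.e.
  by_cases hA1z : A₁ = 0
  · have hg0' : (fun y => ENNReal.ofReal (g y)) =ᵐ[volume] (fun _ => 0) :=
      (lintegral_eq_zero_iff hgm).mp hA1z
    have hx0 : ∀ x,
        (∫⁻ y, ENNReal.ofReal |Real.log (‖x - y‖ / jbr x)| * ENNReal.ofReal (g y)) = 0 := by
      intro x
      have hzero : (fun y => ENNReal.ofReal |Real.log (‖x - y‖ / jbr x)| *
          ENNReal.ofReal (g y)) =ᵐ[volume] (fun _ => 0) := by
        filter_upwards [hg0'] with y hy
        rw [hy, mul_zero]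
      rw [lintegral_congr_ae hzero, lintegral_zero]
    simp only [hx0, mul_zero, ne_eq, OfNat.ofNat_ne_zero, not_false_eq_true, zero_pow,
      lintegral_zero]
    rw [ENNReal.zero_rpow_of_pos (by norm_num)]
    exact zero_le
  -- edge case: u vanishes a.e.
  by_cases hu0 : eLpNorm u 2 volume = 0
  · have hu0' : u =ᵐ[volume] 0 :=
      (eLpNorm_eq_zero_iff hu.aestronglyMeasurable (by norm_num)).mp hu0
    have hzero : (fun x => ((‖u x‖₊ : ℝ≥0∞) *
        ∫⁻ y, ENNReal.ofReal |Real.log (‖x - y‖ / jbr x)| * ENNReal.ofReal (g y)) ^ 2)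
        =ᵐ[volume] (fun _ => 0) := by
      filter_upwards [hu0'] with x hx
      simp [hx]
    rw [lintegral_congr_ae hzero, lintegral_zero,
      ENNReal.zero_rpow_of_pos (by norm_num)]
    exact zero_le
  have hA1pos : 0 < A₁ := pos_iff_ne_zero.mpr hA1z
  -- edge case: some quantity on the RHS is infinite
  by_cases htop : A₁ = ⊤ ∨ A₂ = ⊤ ∨ eLpNorm u 2 volume = ⊤ ∨
      eLpNorm u (ENNReal.ofReal r) volume = ⊤
  · have hCne : C ≠ 0 := fun h => by simp [h] at hC1
    have hAne : A₁ + A₂ ≠ 0 := ne_of_gt (lt_of_lt_of_le hA1pos le_self_add)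
    have hBne : eLpNorm u 2 volume + eLpNorm u (ENNReal.ofReal r) volume ≠ 0 :=
      ne_of_gt (lt_of_lt_of_le (pos_iff_ne_zero.mpr hu0) le_self_add)
    have hRtop : C * (A₁ + A₂) *
        (eLpNorm u 2 volume + eLpNorm u (ENNReal.ofReal r) volume) = ⊤ := by
      have hCA : C * (A₁ + A₂) ≠ 0 := mul_ne_zero hCne hAne
      rcases htop with h | h | h | h
      · have h1 : A₁ + A₂ = ⊤ := by simp [h]
        rw [h1, ENNReal.mul_top hCne, ENNReal.top_mul hBne]
      · have h1 : A₁ + A₂ = ⊤ := by simp [h]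
        rw [h1, ENNReal.mul_top hCne, ENNReal.top_mul hBne]
      · have h1 : eLpNorm u 2 volume + eLpNorm u (ENNReal.ofReal r) volume = ⊤ := by simp [h]
        rw [h1, ENNReal.mul_top hCA]
      · have h1 : eLpNorm u 2 volume + eLpNorm u (ENNReal.ofReal r) volume = ⊤ := by simp [h]
        rw [h1, ENNReal.mul_top hCA]
    exact hRtop ▸ le_top
  push_neg at htop
  obtain ⟨hA1t, hA2t, hB1t, hB2t⟩ := htop
  -- measurability helpers
  have hum : Measurable fun x => (‖u x‖₊ : ℝ≥0∞) :=
    measurable_coe_nnreal_ennreal.comp hu.nnnorm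
  have hjbrm : Measurable jbr :=
    (Real.continuous_sqrt.comp (continuous_const.add (continuous_norm.pow 2))).measurable
  -- the constant part M
  set M : ℝ≥0∞ := ∫⁻ y, ENNReal.ofReal (Real.log (2 * jbr y)) * ENNReal.ofReal (g y)
    with hMdef
  have hMm : Measurable fun y => ENNReal.ofReal (Real.log (2 * jbr y)) *
      ENNReal.ofReal (g y) :=
    (ENNReal.measurable_ofReal.comp (Real.measurable_log.comp (hjbrm.const_mul 2))).mul hgm
  have hlog2le1 : Real.log 2 ≤ 1 := by
    linarith [Real.log_le_sub_one_of_pos (show (0:ℝ) < 2 by norm_num)]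
  have hM_le : M ≤ A₁ + A₂ := by
    rw [hMdef]
    calc (∫⁻ y, ENNReal.ofReal (Real.log (2 * jbr y)) * ENNReal.ofReal (g y))
        ≤ ∫⁻ y, (ENNReal.ofReal (g y) + ENNReal.ofReal (Real.log (jbr y) * g y)) := by
          apply lintegral_mono
          intro y
          have hb1 : 1 ≤ jbr y := jbr_one_le y
          have hlogsplit : Real.log (2 * jbr y) = Real.log 2 + Real.log (jbr y) :=
            Real.log_mul two_ne_zero (jbr_pos y).ne'
          calc ENNReal.ofReal (Real.log (2 * jbr y)) * ENNReal.ofReal (g y)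
              ≤ (ENNReal.ofReal (Real.log 2) + ENNReal.ofReal (Real.log (jbr y))) *
                ENNReal.ofReal (g y) :=
                mul_le_mul_left (by rw [hlogsplit]; exact ENNReal.ofReal_add_le) _
            _ = ENNReal.ofReal (Real.log 2) * ENNReal.ofReal (g y) +
                ENNReal.ofReal (Real.log (jbr y)) * ENNReal.ofReal (g y) := add_mul _ _ _
            _ ≤ 1 * ENNReal.ofReal (g y) + ENNReal.ofReal (Real.log (jbr y) * g y) :=
                add_le_add (mul_le_mul_left (ENNReal.ofReal_le_one.mpr hlog2le1) _)
                  (le_of_eq (ENNReal.ofReal_mul (Real.log_nonneg hb1)).symm)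
            _ = ENNReal.ofReal (g y) + ENNReal.ofReal (Real.log (jbr y) * g y) := by
                rw [one_mul]
      _ = A₁ + A₂ := lintegral_add_left hgm _
  have hA12t : A₁ + A₂ ≠ ⊤ := ENNReal.add_ne_top.mpr ⟨hA1t, hA2t⟩
  have hM_top : M ≠ ⊤ := ne_top_of_le_ne_top hA12t hM_le
  -- the convolution part H
  set H : E2 → ℝ≥0∞ := fun x => ∫⁻ y, hE (x - y) * ENNReal.ofReal (g y) with hHdef
  have hkm : Measurable fun p : E2 × E2 => hE (p.1 - p.2) * ENNReal.ofReal (g p.2) :=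
    (hE_meas.comp (measurable_fst.sub measurable_snd)).mul (hgm.comp measurable_snd)
  have hHm : Measurable H := by rw [hHdef]; exact hkm.lintegral_prod_right'
  -- pointwise bound for the inner integral
  have hpt : ∀ x, (∫⁻ y, ENNReal.ofReal |Real.log (‖x - y‖ / jbr x)| *
      ENNReal.ofReal (g y)) ≤ M + H x := by
    intro x
    have step : ∀ y, ENNReal.ofReal |Real.log (‖x - y‖ / jbr x)| * ENNReal.ofReal (g y) ≤
        ENNReal.ofReal (Real.log (2 * jbr y)) * ENNReal.ofReal (g y) +
          hE (x - y) * ENNReal.ofReal (g y) := by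
      intro y
      have h1 : ENNReal.ofReal |Real.log (‖x - y‖ / jbr x)| ≤
          ENNReal.ofReal (Real.log (2 * jbr y)) + hE (x - y) := by
        calc ENNReal.ofReal |Real.log (‖x - y‖ / jbr x)|
            ≤ ENNReal.ofReal (Real.log (2 * jbr y) + hfun (x - y)) :=
              ENNReal.ofReal_le_ofReal (key_bound x y)
          _ ≤ ENNReal.ofReal (Real.log (2 * jbr y)) + ENNReal.ofReal (hfun (x - y)) :=
              ENNReal.ofReal_add_le
          _ = ENNReal.ofReal (Real.log (2 * jbr y)) + hE (x - y) := rfl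
      calc ENNReal.ofReal |Real.log (‖x - y‖ / jbr x)| * ENNReal.ofReal (g y)
          ≤ (ENNReal.ofReal (Real.log (2 * jbr y)) + hE (x - y)) * ENNReal.ofReal (g y) :=
            mul_le_mul_left h1 _
        _ = _ := add_mul _ _ _
    calc (∫⁻ y, ENNReal.ofReal |Real.log (‖x - y‖ / jbr x)| * ENNReal.ofReal (g y))
        ≤ ∫⁻ y, (ENNReal.ofReal (Real.log (2 * jbr y)) * ENNReal.ofReal (g y) +
            hE (x - y) * ENNReal.ofReal (g y)) := lintegral_mono step
      _ = M + H x := lintegral_add_left hMm _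
  -- convert natural power 2 into rpow
  have hpow : ∀ a : ℝ≥0∞, a ^ (2:ℕ) = a ^ (2:ℝ) := fun a => by
    rw [← ENNReal.rpow_natCast a 2]; norm_num
  simp_rw [hpow]
  set B2 : ℝ≥0∞ := eLpNorm u 2 volume with hB2def
  set Br : ℝ≥0∞ := eLpNorm u (ENNReal.ofReal r) volume with hBrdef
  have hs0' : s ≠ 0 := ne_of_gt hs0
  have hq'0 : q' ≠ 0 := ne_of_gt (lt_trans one_pos hq'1)
  -- step 1 : pointwise bound inside the L² norm
  have step1 : (∫⁻ x, ((‖u x‖₊ : ℝ≥0∞) *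
        ∫⁻ y, ENNReal.ofReal |Real.log (‖x - y‖ / jbr x)| * ENNReal.ofReal (g y)) ^ (2:ℝ))
        ^ (1/2:ℝ)
      ≤ (∫⁻ x, (((fun x => (‖u x‖₊ : ℝ≥0∞) * M) + (fun x => (‖u x‖₊ : ℝ≥0∞) * H x)) x)
          ^ (2:ℝ)) ^ (1/2:ℝ) := by
    apply ENNReal.rpow_le_rpow _ (by norm_num)
    apply lintegral_mono
    intro x
    apply ENNReal.rpow_le_rpow _ (by norm_num)
    simp only [Pi.add_apply]
    rw [← mul_add]
    exact mul_le_mul_right (hpt x) _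
  have step2 := ENNReal.lintegral_Lp_add_le (μ := (volume : Measure E2))
    ((hum.mul_const M).aemeasurable) ((hum.mul hHm).aemeasurable) one_le_two
  -- T1
  have eB2 : B2 = (∫⁻ x, (‖u x‖₊ : ℝ≥0∞) ^ (2:ℝ)) ^ (1/2:ℝ) := by
    rw [hB2def, eLpNorm_eq_lintegral_rpow_enorm_toReal (by norm_num) (by norm_num)]
    norm_num [enorm_eq_nnnorm]
  have hT1 : (∫⁻ x, ((‖u x‖₊ : ℝ≥0∞) * M) ^ (2:ℝ)) ^ (1/2:ℝ) = M * B2 := by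
    have e1 : ∫⁻ x, ((‖u x‖₊:ℝ≥0∞) * M) ^ (2:ℝ)
        = (∫⁻ x, (‖u x‖₊:ℝ≥0∞) ^ (2:ℝ)) * M ^ (2:ℝ) := by
      simp_rw [ENNReal.mul_rpow_of_nonneg _ _ (by norm_num : (0:ℝ) ≤ 2)]
      exact lintegral_mul_const' _ _ (ENNReal.rpow_ne_top_of_nonneg (by norm_num) hM_top)
    rw [e1, ENNReal.mul_rpow_of_nonneg _ _ (by norm_num : (0:ℝ) ≤ 1/2), ← ENNReal.rpow_mul,
      show (2:ℝ) * (1/2) = 1 by norm_num, ENNReal.rpow_one, ← eB2, mul_comm]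
  -- T2 via Hoelder
  have hHlder : ∫⁻ x, ((‖u x‖₊:ℝ≥0∞) * H x) ^ (2:ℝ)
      ≤ (∫⁻ x, (‖u x‖₊:ℝ≥0∞) ^ r) ^ (2/r) * (∫⁻ x, H x ^ s) ^ (2/s) := by
    have h0 := ENNReal.lintegral_mul_le_Lp_mul_Lq volume hconj_r
      (f := fun x => (‖u x‖₊:ℝ≥0∞) ^ (2:ℝ)) (g := fun x => H x ^ (2:ℝ))
      ((ENNReal.continuous_rpow_const.measurable.comp hum).aemeasurable)
      ((ENNReal.continuous_rpow_const.measurable.comp hHm).aemeasurable)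
    simp only [Pi.mul_apply] at h0
    have er1 : 1/(r/2) = 2/r := one_div_div _ _
    have er2 : 1/q' = 2/s := by rw [hsdef]; field_simp
    calc ∫⁻ x, ((‖u x‖₊:ℝ≥0∞) * H x) ^ (2:ℝ)
        = ∫⁻ x, ((‖u x‖₊:ℝ≥0∞) ^ (2:ℝ)) * (H x ^ (2:ℝ)) := by
          simp_rw [ENNReal.mul_rpow_of_nonneg _ _ (by norm_num : (0:ℝ) ≤ 2)]
      _ ≤ (∫⁻ x, ((‖u x‖₊:ℝ≥0∞) ^ (2:ℝ)) ^ (r/2)) ^ (1/(r/2)) *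
            (∫⁻ x, (H x ^ (2:ℝ)) ^ q') ^ (1/q') := h0
      _ = (∫⁻ x, (‖u x‖₊:ℝ≥0∞) ^ r) ^ (2/r) * (∫⁻ x, H x ^ s) ^ (2/s) := by
          simp_rw [← ENNReal.rpow_mul]
          rw [show (2:ℝ) * (r/2) = r by ring, show (2:ℝ) * q' = s from hsdef.symm, er1, er2]
  have eBr : Br = (∫⁻ x, (‖u x‖₊:ℝ≥0∞) ^ r) ^ (1/r) := by
    rw [hBrdef, eLpNorm_eq_lintegral_rpow_enorm_toReal
      (by rw [Ne, ENNReal.ofReal_eq_zero]; exact not_le.mpr hr0) ENNReal.ofReal_ne_top,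
      ENNReal.toReal_ofReal hr0.le]
    simp only [enorm_eq_nnnorm]
  have hT2 : (∫⁻ x, ((‖u x‖₊:ℝ≥0∞) * H x) ^ (2:ℝ)) ^ (1/2:ℝ)
      ≤ Br * (∫⁻ x, H x ^ s) ^ (1/s) := by
    calc (∫⁻ x, ((‖u x‖₊:ℝ≥0∞) * H x) ^ (2:ℝ)) ^ (1/2:ℝ)
        ≤ ((∫⁻ x, (‖u x‖₊:ℝ≥0∞) ^ r) ^ (2/r) * (∫⁻ x, H x ^ s) ^ (2/s)) ^ (1/2:ℝ) :=
          ENNReal.rpow_le_rpow hHlder (by norm_num)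
      _ = Br * (∫⁻ x, H x ^ s) ^ (1/s) := by
          rw [ENNReal.mul_rpow_of_nonneg _ _ (by norm_num : (0:ℝ) ≤ 1/2),
            ← ENNReal.rpow_mul, ← ENNReal.rpow_mul,
            show (2/r) * (1/2:ℝ) = 1/r by ring, show (2/s) * (1/2:ℝ) = 1/s by ring, eBr]
  -- Young's inequality for the convolution-type term
  have hyoung_pt : ∀ x, H x ≤
      (∫⁻ y, hE (x - y) ^ s * ENNReal.ofReal (g y)) ^ (1/s) * A₁ ^ (1/s') := by
    intro x
    have hbase : Measurable (fun y => hE (x - y) ^ s * ENNReal.ofReal (g y)) :=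
      (ENNReal.continuous_rpow_const.measurable.comp
        (hE_meas.comp (measurable_const.sub measurable_id))).mul hgm
    have hmeas1 : AEMeasurable
        (fun y => (hE (x - y) ^ s * ENNReal.ofReal (g y)) ^ (1/s)) volume :=
      (ENNReal.continuous_rpow_const.measurable.comp hbase).aemeasurable
    have hmeas2 : AEMeasurable (fun y => ENNReal.ofReal (g y) ^ (1/s')) volume :=
      (ENNReal.continuous_rpow_const.measurable.comp hgm).aemeasurable
    have heq : ∀ y, hE (x - y) * ENNReal.ofReal (g y) =
        ((fun y => (hE (x - y) ^ s * ENNReal.ofReal (g y)) ^ (1/s)) *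
          (fun y => ENNReal.ofReal (g y) ^ (1/s'))) y := by
      intro y
      simp only [Pi.mul_apply]
      rw [ENNReal.mul_rpow_of_nonneg _ _ (by positivity : (0:ℝ) ≤ 1/s),
        ← ENNReal.rpow_mul, mul_one_div, div_self hs0', ENNReal.rpow_one,
        mul_assoc, ← ENNReal.rpow_add_of_nonneg _ _ (by positivity) (by positivity),
        hinv, ENNReal.rpow_one]
    calc H x = ∫⁻ y, ((fun y => (hE (x - y) ^ s * ENNReal.ofReal (g y)) ^ (1/s)) *
          (fun y => ENNReal.ofReal (g y) ^ (1/s'))) y := by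
          rw [hHdef]; exact lintegral_congr heq
      _ ≤ (∫⁻ y, ((hE (x - y) ^ s * ENNReal.ofReal (g y)) ^ (1/s)) ^ s) ^ (1/s) *
            (∫⁻ y, (ENNReal.ofReal (g y) ^ (1/s')) ^ s') ^ (1/s') :=
          ENNReal.lintegral_mul_le_Lp_mul_Lq volume hconj_s hmeas1 hmeas2
      _ = (∫⁻ y, hE (x - y) ^ s * ENNReal.ofReal (g y)) ^ (1/s) * A₁ ^ (1/s') := by
          simp_rw [← ENNReal.rpow_mul, show (1/s) * s = 1 by field_simp,
            show (1/s') * s' = 1 by field_simp, ENNReal.rpow_one]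
          rfl
  have hint_swap : (∫⁻ x, ∫⁻ y, hE (x - y) ^ s * ENNReal.ofReal (g y)) = Yh * A₁ := by
    have hmeasp : AEMeasurable (fun p : E2 × E2 => hE (p.1 - p.2) ^ s *
        ENNReal.ofReal (g p.2)) ((volume : Measure E2).prod volume) :=
      ((ENNReal.continuous_rpow_const.measurable.comp
        (hE_meas.comp (measurable_fst.sub measurable_snd))).mul
        (hgm.comp measurable_snd)).aemeasurable
    rw [lintegral_lintegral_swap hmeasp]
    have inner : ∀ y : E2, (∫⁻ x, hE (x - y) ^ s * ENNReal.ofReal (g y))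
        = Yh * ENNReal.ofReal (g y) := by
      intro y
      rw [lintegral_mul_const' _ _ ENNReal.ofReal_ne_top]
      congr 1
      exact lintegral_sub_right_eq_self (μ := (volume : Measure E2)) (fun z => hE z ^ s) y
    simp_rw [inner]
    rw [lintegral_const_mul' _ _ hYh_top]
  have hyoung : (∫⁻ x, H x ^ s) ^ (1/s) ≤ Yh ^ (1/s) * A₁ := by
    have h1 : (∫⁻ x, H x ^ s) ≤ (Yh * A₁) * A₁ ^ (s/s') := by
      calc (∫⁻ x, H x ^ s)
          ≤ ∫⁻ x, (∫⁻ y, hE (x - y) ^ s * ENNReal.ofReal (g y)) * A₁ ^ (s/s') := by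
            apply lintegral_mono
            intro x
            calc H x ^ s
                ≤ ((∫⁻ y, hE (x - y) ^ s * ENNReal.ofReal (g y)) ^ (1/s) *
                    A₁ ^ (1/s')) ^ s := ENNReal.rpow_le_rpow (hyoung_pt x) hs0.le
              _ = _ := by
                  rw [ENNReal.mul_rpow_of_nonneg _ _ hs0.le, ← ENNReal.rpow_mul,
                    ← ENNReal.rpow_mul, show (1/s) * s = 1 by field_simp,
                    show (1/s') * s = s/s' by ring, ENNReal.rpow_one]
        _ = (Yh * A₁) * A₁ ^ (s/s') := by
            rw [lintegral_mul_const' _ _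
              (ENNReal.rpow_ne_top_of_nonneg (by positivity) hA1t), hint_swap]
    have hexp : 1 + s/s' = s := by
      have h2 : s * (1/s) + s * (1/s') = s * 1 := by rw [← mul_add, hinv]
      rw [mul_one_div, div_self hs0', mul_one_div, mul_one] at h2
      linarith
    calc (∫⁻ x, H x ^ s) ^ (1/s) ≤ ((Yh * A₁) * A₁ ^ (s/s')) ^ (1/s) :=
          ENNReal.rpow_le_rpow h1 (by positivity)
      _ = Yh ^ (1/s) * A₁ := by
          nth_rewrite 1 [← ENNReal.rpow_one A₁]
          rw [mul_assoc, ← ENNReal.rpow_add _ _ hA1z hA1t, hexp,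
            ENNReal.mul_rpow_of_nonneg _ _ (by positivity), ← ENNReal.rpow_mul,
            mul_one_div, div_self hs0', ENNReal.rpow_one]
  -- final assembly
  refine le_trans step1 (le_trans step2 ?_)
  calc (∫⁻ x, ((‖u x‖₊:ℝ≥0∞) * M) ^ (2:ℝ)) ^ (1/2:ℝ) +
        (∫⁻ x, ((‖u x‖₊:ℝ≥0∞) * H x) ^ (2:ℝ)) ^ (1/2:ℝ)
      ≤ M * B2 + Br * (Yh ^ (1/s) * A₁) :=
        add_le_add (le_of_eq hT1) (le_trans hT2 (mul_le_mul_right hyoung _))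
    _ ≤ (C * (A₁ + A₂)) * B2 + (C * (A₁ + A₂)) * Br := by
        apply add_le_add
        · refine mul_le_mul_left ?_ _
          calc M ≤ A₁ + A₂ := hM_le
            _ = 1 * (A₁ + A₂) := (one_mul _).symm
            _ ≤ C * (A₁ + A₂) := mul_le_mul_left hC1 _
        · calc Br * (Yh ^ (1/s) * A₁) = (Yh ^ (1/s) * A₁) * Br := mul_comm _ _
            _ ≤ (C * (A₁ + A₂)) * Br :=
                mul_le_mul_left (mul_le_mul' hC2 le_self_add) _
    _ = C * (A₁ + A₂) * (B2 + Br) := (mul_add _ _ _).symm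

end
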